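/- arXiv:hep-th/9711045 — 2 statements merged into one kernel-verified Lean document; each statement's English description precedes it below -/
import Mathlib

section
/- If ∇ is a derivation of order r and degree k, and ∇' is a derivation of order s and degree l on a graded commutative algebra A, then the composition ∇ ∘ ∇' is a derivation of order r+s and degree k+l. -/
open scoped TensorProduct DirectSum

/-- Koszul sign of a permutation acting on graded elements of degrees `d`. -/
noncomputable def koszulSign (k : Type) [Field k] {n : ℕ} (σ : Equiv.Perm (Fin n))
    (d : Fin n → ℤ) : k :=
  ∏ p ∈ Finset.univ.filter (fun p : Fin n × Fin n => p.1 < p.2 ∧ σ p.2 < σ p.1),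
    (-1 : k) ^ (d p.1 * d p.2)

/-- `σ` is an `(i, n-i)`-unshuffle. -/
def IsUnshuffle {n : ℕ} (i : ℕ) (σ : Equiv.Perm (Fin n)) : Prop :=
  ∀ p q : Fin n, p < q → (q.val < i ∨ i ≤ p.val) → σ p < σ q

instance {n i : ℕ} : DecidablePred (IsUnshuffle (n := n) i) := fun σ => by
  unfold IsUnshuffle; infer_instance

/-- Graded supercommutativity. -/
def SuperComm {k A : Type} [Field k] [Ring A] [Algebra k A] (𝒜 : ℤ → Submodule k A) : Prop :=
  ∀ (i j : ℤ) (a b : A), a ∈ 𝒜 i → b ∈ 𝒜 j → a * b = ((-1 : k) ^ (i * j)) • (b * a)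

/-- The deviations `Φⁿ⁺¹` of a linear endomorphism of a graded algebra, evaluated on
homogeneous elements; `dev 𝒜 D n` is the `(n+1)`-st deviation `Φ^{n+1}_D`. -/
noncomputable def dev {k A : Type} [Field k] [Ring A] [Algebra k A]
    (𝒜 : ℤ → Submodule k A) [SetLike.GradedMonoid 𝒜]
    (D : A →ₗ[k] A) : (n : ℕ) → ((Fin (n+1)) → (Σ i : ℤ, 𝒜 i)) → A
  | 0, a => D ((a 0).2 : A)
  | (n+1), a =>
      dev 𝒜 D n (Fin.snoc (fun i : Fin n => a i.castSucc.castSucc)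
        ⟨(a (Fin.castSucc (Fin.last n))).1 + (a (Fin.last (n+1))).1,
          ⟨((a (Fin.castSucc (Fin.last n))).2 : A) * ((a (Fin.last (n+1))).2 : A),
            SetLike.mul_mem_graded (a (Fin.castSucc (Fin.last n))).2.2
              (a (Fin.last (n+1))).2.2⟩⟩)
      - dev 𝒜 D n (fun i : Fin (n+1) => a i.castSucc) * ((a (Fin.last (n+1))).2 : A)
      - ((-1 : k) ^ ((a (Fin.castSucc (Fin.last n))).1 * (a (Fin.last (n+1))).1)) •
        (dev 𝒜 D n (Fin.snoc (fun i : Fin n => a i.castSucc.castSucc) (a (Fin.last (n+1))))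
          * ((a (Fin.castSucc (Fin.last n))).2 : A))

/-- Sign operator: scales the degree `i` component by `(-1)^{d·i}`. -/
noncomputable def gsign {k M : Type} [Field k] [AddCommGroup M] [Module k M]
    (ℳ : ℤ → Submodule k M) [DirectSum.Decomposition ℳ] (d : ℤ) : M →ₗ[k] M :=
  (DirectSum.decomposeLinearEquiv ℳ).symm.toLinearMap ∘ₗ
    (DirectSum.toModule k ℤ (⨁ i, ℳ i)
      (fun i => ((-1 : k) ^ (d * i)) • DirectSum.lof k ℤ (fun i => ℳ i) i)) ∘ₗ
    (DirectSum.decomposeLinearEquiv ℳ).toLinearMap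

/-- The graded twist (Koszul-signed flip) on `M ⊗ M`. -/
noncomputable def gtwist {k M : Type} [Field k] [CharZero k] [AddCommGroup M] [Module k M]
    (ℳ : ℤ → Submodule k M) [DirectSum.Decomposition ℳ] : M ⊗[k] M →ₗ[k] M ⊗[k] M :=
  (TensorProduct.comm k M M).toLinearMap ∘ₗ
    (LinearMap.id - (2 : k) • TensorProduct.map
      ((2⁻¹ : k) • (LinearMap.id - gsign ℳ 1))
      ((2⁻¹ : k) • (LinearMap.id - gsign ℳ 1)))


section Aux

set_option linter.unusedSectionVars false
set_option maxHeartbeats 1000000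

variable {k A : Type} [Field k] [Ring A] [Algebra k A]
  (𝒜 : ℤ → Submodule k A) [SetLike.GradedMonoid 𝒜]

local notation "H" => (Σ i : ℤ, 𝒜 i)

lemma sgn_congr (x y : ℤ) (h : Even (x - y)) : (-1:k)^x = (-1:k)^y := by
  obtain ⟨u, hu⟩ := h
  obtain ⟨t, ht⟩ : ∃ t, x = y + 2*t := ⟨u, by omega⟩
  subst ht
  rw [zpow_add₀ (by norm_num : (-1:k) ≠ 0), zpow_mul]
  norm_num

lemma sgn_mul (x y : ℤ) : (-1:k)^x * (-1:k)^y = (-1:k)^(x+y) :=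
  (zpow_add₀ (by norm_num : (-1:k) ≠ 0) x y).symm

noncomputable def psiHat (δ : ℤ) (b : H) (F : A →ₗ[k] A) : A →ₗ[k] A :=
  F ∘ₗ LinearMap.mulLeft k (b.2 : A)
    - ((-1:k)^(b.1 * δ)) • (LinearMap.mulLeft k (b.2 : A) ∘ₗ F)

noncomputable def word (δ : ℤ) (F : A →ₗ[k] A) : (n : ℕ) → (Fin n → H) → (A →ₗ[k] A)
  | 0, _ => F
  | n+1, a => psiHat 𝒜 (δ + ∑ i : Fin n, (a i.castSucc).1) (a (Fin.last n))
      (word δ F n (fun i => a i.castSucc))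

lemma word_succ (δ : ℤ) (F : A →ₗ[k] A) (n : ℕ) (a : Fin (n+1) → H) :
    word 𝒜 δ F (n+1) a = psiHat 𝒜 (δ + ∑ i : Fin n, (a i.castSucc).1) (a (Fin.last n))
      (word 𝒜 δ F n (fun i => a i.castSucc)) := rfl

lemma word_succ_first (δ : ℤ) (F : A →ₗ[k] A) (n : ℕ) (a : Fin (n+1) → H) :
    word 𝒜 δ F (n+1) a = word 𝒜 (δ + (a 0).1) (psiHat 𝒜 δ (a 0) F) n (fun i => a i.succ) := by
  induction n with
  | zero =>
      rw [word_succ]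
      simp only [Finset.univ_eq_empty, Finset.sum_empty, add_zero]
      rfl
  | succ n ih =>
      rw [word_succ 𝒜 δ F (n+1) a, ih (fun i => a i.castSucc),
        word_succ 𝒜 (δ + (a 0).1) (psiHat 𝒜 δ (a 0) F) n (fun i => a i.succ)]
      congr 1
      · simp only [Fin.castSucc_zero, Fin.succ_castSucc, Fin.sum_univ_succ]
        ring


lemma psiHat_apply (δ : ℤ) (b : H) (F : A →ₗ[k] A) (x : A) :
    psiHat 𝒜 δ b F x = F ((b.2 : A) * x) - ((-1:k)^(b.1 * δ)) • ((b.2 : A) * F x) := rfl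

/-- order predicate: all `psiHat`-words of length `t` vanish on homogeneous elements. -/
def Qp (δ : ℤ) (t : ℕ) (F : A →ₗ[k] A) : Prop :=
  ∀ (a : Fin t → H) (j : ℤ) (x : A), x ∈ 𝒜 j → word 𝒜 δ F t a x = 0

lemma Qp_of_vanish (δ : ℤ) (F : A →ₗ[k] A)
    (h : ∀ (j : ℤ) (x : A), x ∈ 𝒜 j → F x = 0) (t : ℕ) : Qp 𝒜 δ t F := by
  induction t with
  | zero => exact fun a j x hx => h j x hx
  | succ t ih =>
      intro a j x hx
      rw [word_succ, psiHat_apply]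
      rw [ih (fun i => a i.castSucc) _ _
        (SetLike.mul_mem_graded (a (Fin.last t)).2.2 hx),
        ih (fun i => a i.castSucc) j x hx]
      simp

lemma Qp_peel (δ : ℤ) (t : ℕ) (F : A →ₗ[k] A) (hQ : Qp 𝒜 δ (t+1) F) (b : H) :
    Qp 𝒜 (δ + b.1) t (psiHat 𝒜 δ b F) := by
  intro a j x hx
  have := hQ (Fin.cons b a) j x hx
  rwa [word_succ_first, Fin.cons_zero] at this

lemma Qp_zero_eval (δ : ℤ) (F : A →ₗ[k] A) (hQ : Qp 𝒜 δ 0 F) :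
    ∀ (j : ℤ) (x : A), x ∈ 𝒜 j → F x = 0 := fun j x hx => hQ (fun i => i.elim0) j x hx

lemma psiHat_leibniz (δ ε : ℤ) (b : H) (F G : A →ₗ[k] A) :
    psiHat 𝒜 (δ + ε) b (F ∘ₗ G) =
      F ∘ₗ psiHat 𝒜 ε b G + ((-1:k)^(b.1 * ε)) • (psiHat 𝒜 δ b F ∘ₗ G) := by
  ext x
  simp only [LinearMap.add_apply, LinearMap.coe_comp, Function.comp_apply,
    LinearMap.smul_apply, psiHat_apply, map_sub, map_smul, smul_sub]
  rw [smul_smul, sgn_mul]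
  have e : b.1 * ε + b.1 * δ = b.1 * (δ + ε) := by ring
  rw [e]
  abel


lemma psiHat_add (δ : ℤ) (b : H) (F G : A →ₗ[k] A) :
    psiHat 𝒜 δ b (F + G) = psiHat 𝒜 δ b F + psiHat 𝒜 δ b G := by
  unfold psiHat
  rw [LinearMap.add_comp, LinearMap.comp_add, smul_add]
  abel

lemma psiHat_smul (δ : ℤ) (b : H) (c : k) (F : A →ₗ[k] A) :
    psiHat 𝒜 δ b (c • F) = c • psiHat 𝒜 δ b F := by
  unfold psiHat
  rw [LinearMap.smul_comp, LinearMap.comp_smul, smul_sub, smul_comm]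

lemma word_add (δ : ℤ) (F G : A →ₗ[k] A) (n : ℕ) (a : Fin n → H) :
    word 𝒜 δ (F + G) n a = word 𝒜 δ F n a + word 𝒜 δ G n a := by
  induction n with
  | zero => rfl
  | succ n ih => rw [word_succ, word_succ, word_succ, ih, psiHat_add]

lemma word_smul (δ : ℤ) (c : k) (F : A →ₗ[k] A) (n : ℕ) (a : Fin n → H) :
    word 𝒜 δ (c • F) n a = c • word 𝒜 δ F n a := by
  induction n with
  | zero => rfl
  | succ n ih => rw [word_succ, word_succ, ih, psiHat_smul]

lemma psiHat_mem (δ : ℤ) (b : H) (F : A →ₗ[k] A)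
    (hF : ∀ (j : ℤ) (x : A), x ∈ 𝒜 j → F x ∈ 𝒜 (j + δ)) :
    ∀ (j : ℤ) (x : A), x ∈ 𝒜 j → psiHat 𝒜 δ b F x ∈ 𝒜 (j + (δ + b.1)) := by
  intro j x hx
  rw [psiHat_apply]
  have h1 : F ((b.2:A) * x) ∈ 𝒜 ((b.1 + j) + δ) :=
    hF _ _ (SetLike.mul_mem_graded b.2.2 hx)
  have h2 : (b.2:A) * F x ∈ 𝒜 (b.1 + (j + δ)) := SetLike.mul_mem_graded b.2.2 (hF _ _ hx)
  have e1 : (b.1 + j) + δ = j + (δ + b.1) := by ring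
  have e2 : b.1 + (j + δ) = j + (δ + b.1) := by ring
  rw [e1] at h1; rw [e2] at h2
  exact sub_mem h1 (Submodule.smul_mem _ _ h2)

lemma word_mem (δ : ℤ) (F : A →ₗ[k] A)
    (hF : ∀ (j : ℤ) (x : A), x ∈ 𝒜 j → F x ∈ 𝒜 (j + δ)) :
    ∀ (n : ℕ) (a : Fin n → H) (j : ℤ) (x : A), x ∈ 𝒜 j →
      word 𝒜 δ F n a x ∈ 𝒜 (j + (δ + ∑ i, (a i).1)) := by
  intro n
  induction n with
  | zero =>
      intro a j x hx
      simpa [word] using hF j x hx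
  | succ n ih =>
      intro a j x hx
      rw [word_succ]
      have := psiHat_mem 𝒜 (δ + ∑ i : Fin n, (a i.castSucc).1) (a (Fin.last n))
        (word 𝒜 δ F n (fun i => a i.castSucc)) (fun j x hx => ih _ j x hx) j x hx
      have e : j + (δ + ∑ i : Fin n, (a i.castSucc).1 + (a (Fin.last n)).1)
          = j + (δ + ∑ i : Fin (n+1), (a i).1) := by
        rw [Fin.sum_univ_castSucc]; ring
      rwa [e] at this


lemma Qp_congr (δ δ' : ℤ) (h : δ = δ') (t : ℕ) (F : A →ₗ[k] A) (hQ : Qp 𝒜 δ t F) :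
    Qp 𝒜 δ' t F := h ▸ hQ

lemma Qp_comp (N : ℕ) : ∀ (t u : ℕ) (δ ε : ℤ) (F G : A →ₗ[k] A), t + u ≤ N →
    (∀ (j : ℤ) (x : A), x ∈ 𝒜 j → F x ∈ 𝒜 (j+δ)) →
    (∀ (j : ℤ) (x : A), x ∈ 𝒜 j → G x ∈ 𝒜 (j+ε)) →
    Qp 𝒜 δ (t+1) F → Qp 𝒜 ε (u+1) G → Qp 𝒜 (δ+ε) (t+u+1) (F ∘ₗ G) := by
  induction N with
  | zero =>
      intro t u δ ε F G hN hF hG hQF hQG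
      obtain ⟨rfl, rfl⟩ : t = 0 ∧ u = 0 := by omega
      intro a j x hx
      rw [word_succ_first 𝒜]
      have hvan : ∀ (j : ℤ) (x : A), x ∈ 𝒜 j → psiHat 𝒜 (δ+ε) (a 0) (F ∘ₗ G) x = 0 := by
        intro j x hx
        rw [psiHat_leibniz 𝒜 δ ε]
        have h1 : psiHat 𝒜 ε (a 0) G x = 0 :=
          Qp_zero_eval 𝒜 _ _ (Qp_peel 𝒜 ε 0 G hQG (a 0)) j x hx
        have h2 : psiHat 𝒜 δ (a 0) F (G x) = 0 :=
          Qp_zero_eval 𝒜 _ _ (Qp_peel 𝒜 δ 0 F hQF (a 0)) _ _ (hG j x hx)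
        simp [h1, h2]
      exact Qp_of_vanish 𝒜 _ _ hvan 0 (fun i => (a i.succ)) j x hx
  | succ N ih =>
      intro t u δ ε F G hN hF hG hQF hQG
      intro a j x hx
      rw [word_succ_first 𝒜, psiHat_leibniz 𝒜 δ ε, word_add 𝒜, word_smul 𝒜]
      simp only [LinearMap.add_apply, LinearMap.smul_apply]
      have hT1 : word 𝒜 (δ + ε + (a 0).1) (F ∘ₗ psiHat 𝒜 ε (a 0) G) (t+u)
          (fun i => a i.succ) x = 0 := by
        cases u with
        | zero =>
            have hvan : ∀ (j : ℤ) (x : A), x ∈ 𝒜 j → (F ∘ₗ psiHat 𝒜 ε (a 0) G) x = 0 := by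
              intro j x hx
              have h1 : psiHat 𝒜 ε (a 0) G x = 0 :=
                Qp_zero_eval 𝒜 _ _ (Qp_peel 𝒜 ε 0 G hQG (a 0)) j x hx
              simp [h1]
            exact Qp_of_vanish 𝒜 _ _ hvan _ _ j x hx
        | succ u' =>
            have key := ih t u' δ (ε + (a 0).1) F (psiHat 𝒜 ε (a 0) G) (by omega)
              hF (psiHat_mem 𝒜 ε (a 0) G hG) hQF (Qp_peel 𝒜 ε (u'+1) G hQG (a 0))
            exact Qp_congr 𝒜 _ _ (by ring) _ _ key (fun i => a i.succ) j x hx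
      have hT2 : word 𝒜 (δ + ε + (a 0).1) (psiHat 𝒜 δ (a 0) F ∘ₗ G) (t+u)
          (fun i => a i.succ) x = 0 := by
        cases t with
        | zero =>
            have hvan : ∀ (j : ℤ) (x : A), x ∈ 𝒜 j → (psiHat 𝒜 δ (a 0) F ∘ₗ G) x = 0 := by
              intro j x hx
              have h1 : psiHat 𝒜 δ (a 0) F (G x) = 0 :=
                Qp_zero_eval 𝒜 _ _ (Qp_peel 𝒜 δ 0 F hQF (a 0)) _ _ (hG j x hx)
              simp [h1]
            exact Qp_of_vanish 𝒜 _ _ hvan _ _ j x hx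
        | succ t' =>
            have key := ih t' u (δ + (a 0).1) ε (psiHat 𝒜 δ (a 0) F) G (by omega)
              (psiHat_mem 𝒜 δ (a 0) F hF) hG (Qp_peel 𝒜 δ (t'+1) F hQF (a 0)) hQG
            have key2 := Qp_congr 𝒜 _ _ (by ring : δ + (a 0).1 + ε = δ + ε + (a 0).1)
              _ _ key
            have e : t' + u + 1 = t' + 1 + u := by omega
            exact (e ▸ key2) (fun i => a i.succ) j x hx
      rw [hT1, hT2, smul_zero, add_zero]

lemma word_zero (δ : ℤ) (F : A →ₗ[k] A) (a : Fin 0 → H) : word 𝒜 δ F 0 a = F := rfl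

lemma dev_zero (D : A →ₗ[k] A) (a : Fin 1 → H) : dev 𝒜 D 0 a = D ((a 0).2 : A) := rfl

lemma dev_succ (D : A →ₗ[k] A) (n : ℕ) (a : Fin (n+2) → H) :
    dev 𝒜 D (n+1) a =
      dev 𝒜 D n (Fin.snoc (fun i : Fin n => a i.castSucc.castSucc)
        ⟨(a (Fin.castSucc (Fin.last n))).1 + (a (Fin.last (n+1))).1,
          ⟨((a (Fin.castSucc (Fin.last n))).2 : A) * ((a (Fin.last (n+1))).2 : A),
            SetLike.mul_mem_graded (a (Fin.castSucc (Fin.last n))).2.2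
              (a (Fin.last (n+1))).2.2⟩⟩)
      - dev 𝒜 D n (fun i : Fin (n+1) => a i.castSucc) * ((a (Fin.last (n+1))).2 : A)
      - ((-1 : k) ^ ((a (Fin.castSucc (Fin.last n))).1 * (a (Fin.last (n+1))).1)) •
        (dev 𝒜 D n (Fin.snoc (fun i : Fin n => a i.castSucc.castSucc) (a (Fin.last (n+1))))
          * ((a (Fin.castSucc (Fin.last n))).2 : A)) := rfl

lemma super_aux (hcomm : SuperComm 𝒜) {m : ℤ} {y : A} (hy : y ∈ 𝒜 m) (b : H)
    (c1 δ : ℤ) (hm : m = c1 + δ) :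
    ((-1:k)^(b.1*c1)) • (y * (b.2:A)) = ((-1:k)^(b.1*δ)) • ((b.2:A) * y) := by
  rw [hcomm m b.1 y b.2 hy b.2.2, smul_smul, sgn_mul (k:=k)]
  subst hm
  exact congrArg (· • _) (sgn_congr (k:=k) _ _ ⟨b.1*c1, by ring⟩)

lemma super_aux2 (hcomm : SuperComm 𝒜) (P : A) (b c : H) :
    ((-1:k)^(b.1*c.1)) • ((P * (c.2:A)) * (b.2:A)) = P * ((b.2:A) * (c.2:A)) := by
  rw [mul_assoc, hcomm c.1 b.1 c.2 b.2 c.2.2 b.2.2, mul_smul_comm, smul_smul, sgn_mul (k:=k)]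
  rw [sgn_congr (k:=k) _ 0 ⟨b.1*c.1, by ring⟩, zpow_zero, one_smul]

lemma dev_eq_word (hcomm : SuperComm 𝒜) (dg : ℤ) (D : A →ₗ[k] A)
    (hD : ∀ (j : ℤ) (x : A), x ∈ 𝒜 j → D x ∈ 𝒜 (j + dg)) :
    ∀ (n : ℕ) (a : Fin (n+2) → H),
      dev 𝒜 D (n+1) a = word 𝒜 dg D (n+1) (fun i => a i.castSucc)
          ((a (Fin.last (n+1))).2 : A)
        - dev 𝒜 D n (fun i => a i.castSucc) * ((a (Fin.last (n+1))).2 : A) := by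
  intro n
  induction n with
  | zero =>
      intro a
      rw [dev_succ, word_succ]
      simp only [Finset.univ_eq_empty, Finset.sum_empty, psiHat_apply, dev_zero,
        Fin.snoc_last, Fin.snoc_castSucc]
      set b := a (Fin.castSucc (Fin.last 0)) with hb
      set c := a (Fin.last 1) with hc
      have h0 : ((Fin.last 0).castSucc : Fin 2) = 0 := rfl
      have f1 : ((-1:k)^(b.1*c.1)) • (D (c.2:A) * (b.2:A))
          = ((-1:k)^(b.1*(dg+0))) • ((b.2:A) * D (c.2:A)) := by
        refine super_aux 𝒜 hcomm (hD c.1 _ c.2.2) b c.1 (dg+0) (by ring)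
      have e0 : (Fin.snoc (fun i : Fin 0 => a i.castSucc.castSucc)
          (⟨b.1 + c.1, ⟨(b.2:A) * (c.2:A), SetLike.mul_mem_graded b.2.2 c.2.2⟩⟩ : H) : Fin 1 → H) 0
          = ⟨b.1 + c.1, ⟨(b.2:A) * (c.2:A), SetLike.mul_mem_graded b.2.2 c.2.2⟩⟩ := rfl
      have e1 : (Fin.snoc (fun i : Fin 0 => a i.castSucc.castSucc) c : Fin 1 → H) 0 = c := rfl
      rw [e0, e1]
      simp only [word_zero]
      rw [f1]
      abel
  | succ n ih =>
      intro a
      rw [dev_succ]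
      rw [ih (Fin.snoc (fun i : Fin (n+1) => a i.castSucc.castSucc)
        ⟨(a (Fin.castSucc (Fin.last (n+1)))).1 + (a (Fin.last (n+2))).1,
          ⟨((a (Fin.castSucc (Fin.last (n+1)))).2 : A) * ((a (Fin.last (n+2))).2 : A),
            SetLike.mul_mem_graded (a (Fin.castSucc (Fin.last (n+1)))).2.2
              (a (Fin.last (n+2))).2.2⟩⟩),
        ih (fun i : Fin (n+2) => a i.castSucc),
        ih (Fin.snoc (fun i : Fin (n+1) => a i.castSucc.castSucc) (a (Fin.last (n+2)))),
        word_succ 𝒜 dg D (n+1) (fun i => a i.castSucc), psiHat_apply]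
      simp only [Fin.snoc_castSucc]
      rw [Fin.snoc_last, Fin.snoc_last]
      set b := a (Fin.castSucc (Fin.last (n+1))) with hb
      set c := a (Fin.last (n+2)) with hc
      set W := word 𝒜 dg D (n+1) (fun i => a i.castSucc.castSucc) with hW
      set P := dev 𝒜 D n (fun i => a i.castSucc.castSucc) with hP
      set δ := dg + ∑ i : Fin (n+1), (a i.castSucc.castSucc).1 with hδ
      have f1 : ((-1:k)^(b.1*c.1)) • (W (c.2:A) * (b.2:A))
          = ((-1:k)^(b.1*δ)) • ((b.2:A) * W (c.2:A)) := by
        refine super_aux 𝒜 hcomm ?_ b c.1 δ rfl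
        exact word_mem 𝒜 dg D hD (n+1) _ c.1 _ c.2.2
      have f2 : ((-1:k)^(b.1*c.1)) • ((P * (c.2:A)) * (b.2:A))
          = P * ((b.2:A) * (c.2:A)) := super_aux2 𝒜 hcomm P b c
      rw [sub_mul (W (c.2:A)) (P * (c.2:A)) (b.2:A), smul_sub, f1, f2]
      abel
lemma Hext {i j : ℤ} (x : 𝒜 i) (y : 𝒜 j) (h : i = j) (h2 : (x:A) = (y:A)) :
    (⟨i,x⟩ : H) = ⟨j,y⟩ := by
  subst h
  exact congrArg (Sigma.mk i) (Subtype.ext h2)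

lemma mem_deg_congr {x : A} {i j : ℤ} (h : i = j) (hx : x ∈ 𝒜 i) : x ∈ 𝒜 j := h ▸ hx

lemma dev_mem (hcomm : SuperComm 𝒜) (dg : ℤ) (D : A →ₗ[k] A)
    (hD : ∀ (j : ℤ) (x : A), x ∈ 𝒜 j → D x ∈ 𝒜 (j + dg)) :
    ∀ (n : ℕ) (a : Fin (n+1) → H), dev 𝒜 D n a ∈ 𝒜 (dg + ∑ i, (a i).1) := by
  intro n
  induction n with
  | zero =>
      intro a
      refine mem_deg_congr 𝒜 ?_ (hD (a 0).1 _ (a 0).2.2)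
      rw [Fin.sum_univ_one]; ring
  | succ n ih =>
      intro a
      rw [dev_eq_word 𝒜 hcomm dg D hD n a]
      refine sub_mem ?_ ?_
      · refine mem_deg_congr 𝒜 ?_
          (word_mem 𝒜 dg D hD (n+1) (fun i => a i.castSucc) (a (Fin.last (n+1))).1 _
            (a (Fin.last (n+1))).2.2)
        simp only [Fin.sum_univ_castSucc]; ring
      · refine mem_deg_congr 𝒜 ?_
          (SetLike.mul_mem_graded (ih (fun i => a i.castSucc)) (a (Fin.last (n+1))).2.2)
        simp only [Fin.sum_univ_castSucc]; ring

/-- the homogeneous element 1. -/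
noncomputable def oneH : H := ⟨0, 1, SetLike.one_mem_graded 𝒜⟩

lemma oneH_coe : ((oneH 𝒜).2 : A) = 1 := rfl

lemma snoc_const_one (n : ℕ) :
    (Fin.snoc (fun _ : Fin n => oneH 𝒜) (oneH 𝒜) : Fin (n+1) → H) = fun _ => oneH 𝒜 := by
  funext i
  induction i using Fin.lastCases with
  | last => rw [Fin.snoc_last]
  | cast i => rw [Fin.snoc_castSucc]

lemma dev_ones (D : A →ₗ[k] A) :
    ∀ n : ℕ, dev 𝒜 D n (fun _ => oneH 𝒜) = ((-1:k)^n) • D 1 := by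
  intro n
  induction n with
  | zero => rw [dev_zero, pow_zero, one_smul]; rfl
  | succ n ih =>
      rw [dev_succ]
      have h1 : (⟨(oneH 𝒜).1 + (oneH 𝒜).1,
          ⟨((oneH 𝒜).2 : A) * ((oneH 𝒜).2 : A),
            SetLike.mul_mem_graded (oneH 𝒜).2.2 (oneH 𝒜).2.2⟩⟩ : H) = oneH 𝒜 :=
        Hext 𝒜 _ _ (by simp [oneH]) (mul_one 1)
      rw [h1, ih, oneH_coe, mul_one, mul_one]
      have h2 : ((-1:k) ^ ((oneH 𝒜).1 * (oneH 𝒜).1)) = 1 := by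
        rw [show ((oneH 𝒜).1 * (oneH 𝒜).1 : ℤ) = 0 by norm_num [oneH], zpow_zero]
      rw [h2, one_smul, pow_succ]
      module

lemma dev_snoc_one (F : A →ₗ[k] A) (hF1 : F 1 = 0) :
    ∀ (n : ℕ) (g : Fin n → H), dev 𝒜 F n (Fin.snoc g (oneH 𝒜)) = 0 := by
  intro n
  induction n with
  | zero =>
      intro g
      rw [dev_zero, show ((Fin.snoc g (oneH 𝒜) : Fin 1 → H) 0) = oneH 𝒜 from Fin.snoc_last _ _,
        oneH_coe, hF1]
  | succ n ih =>
      intro g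
      rw [dev_succ, Fin.snoc_last]
      have hb : (Fin.snoc g (oneH 𝒜) : Fin (n+2) → H) (Fin.castSucc (Fin.last n))
          = g (Fin.last n) := Fin.snoc_castSucc _ _ _
      rw [hb]
      simp only [Fin.snoc_castSucc, oneH_coe, mul_one]
      have h1 : (⟨(g (Fin.last n)).1 + (oneH 𝒜).1,
          ⟨((g (Fin.last n)).2 : A), mem_deg_congr 𝒜 (by simp [oneH]) (g (Fin.last n)).2.2⟩⟩ : H)
          = g (Fin.last n) := Hext 𝒜 _ _ (by simp [oneH]) rfl
      rw [h1]
      have h2 : (Fin.snoc (fun i : Fin n => g i.castSucc) (g (Fin.last n)) : Fin (n+1) → H)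
          = g := by
        funext i
        induction i using Fin.lastCases with
        | last => rw [Fin.snoc_last]
        | cast i => rw [Fin.snoc_castSucc]
      rw [h2, ih (fun i => g i.castSucc)]
      simp [oneH]




lemma Qp_top (hcomm : SuperComm 𝒜) (dg : ℤ) (D : A →ₗ[k] A)
    (hD : ∀ (j : ℤ) (x : A), x ∈ 𝒜 j → D x ∈ 𝒜 (j + dg)) (m : ℕ)
    (hvan : ∀ a : Fin (m+2) → H, dev 𝒜 D (m+1) a = 0) : Qp 𝒜 dg (m+2) D := by
  intro a j x hx
  rw [word_succ, psiHat_apply]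
  set b := a (Fin.last (m+1)) with hb
  set W := word 𝒜 dg D (m+1) (fun i => a i.castSucc) with hW
  set P := dev 𝒜 D m (fun i => a i.castSucc) with hP
  set δ := dg + ∑ i : Fin (m+1), (a i.castSucc).1 with hδ
  have hmul : ∀ y : H, W ((y.2 : A)) = P * (y.2 : A) := by
    intro y
    have h := dev_eq_word 𝒜 hcomm dg D hD m (Fin.snoc (fun i => a i.castSucc) y)
    rw [hvan _, Fin.snoc_last] at h
    simp only [Fin.snoc_castSucc] at h
    exact (sub_eq_zero.mp h.symm)
  have h2 : W ((b.2:A) * x) = P * ((b.2:A) * x) :=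
    hmul ⟨b.1 + j, ⟨(b.2:A) * x, SetLike.mul_mem_graded b.2.2 hx⟩⟩
  have h3 : W x = P * x := hmul ⟨j, ⟨x, hx⟩⟩
  rw [h2, h3]
  have hPmem : P ∈ 𝒜 δ := dev_mem 𝒜 hcomm dg D hD m (fun i => a i.castSucc)
  have h4 : P * (b.2:A) = ((-1:k)^(δ * b.1)) • ((b.2:A) * P) :=
    hcomm δ b.1 P (b.2:A) hPmem b.2.2
  rw [← mul_assoc, h4, smul_mul_assoc, mul_assoc, show δ * b.1 = b.1 * δ from mul_comm _ _,
    sub_self]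

lemma main_order (hcomm : SuperComm 𝒜) (dg eg : ℤ) (D D' : A →ₗ[k] A)
    (hD : ∀ (i : ℤ) (a : A), a ∈ 𝒜 i → D a ∈ 𝒜 (i + dg))
    (hD' : ∀ (i : ℤ) (a : A), a ∈ 𝒜 i → D' a ∈ 𝒜 (i + eg))
    (r' s' : ℕ)
    (hordD : ∀ a : Fin (r'+2) → H, dev 𝒜 D (r'+1) a = 0)
    (hordD' : ∀ a : Fin (s'+2) → H, dev 𝒜 D' (s'+1) a = 0) :
    ∀ a : Fin (r'+1+(s'+1)+1) → H, dev 𝒜 (D ∘ₗ D') (r'+1+(s'+1)) a = 0 := by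
  have hF : ∀ (j : ℤ) (x : A), x ∈ 𝒜 j → (D ∘ₗ D') x ∈ 𝒜 (j + (dg + eg)) := by
    intro j x hx
    refine mem_deg_congr 𝒜 (by ring) (hD _ _ (hD' j x hx))
  have hQD : Qp 𝒜 dg (r'+2) D := Qp_top 𝒜 hcomm dg D hD r' hordD
  have hQD' : Qp 𝒜 eg (s'+2) D' := Qp_top 𝒜 hcomm eg D' hD' s' hordD'
  have hQ : Qp 𝒜 (dg+eg) (r'+1+(s'+1)+1) (D ∘ₗ D') :=
    Qp_comp 𝒜 (r'+1+(s'+1)) (r'+1) (s'+1) dg eg D D' le_rfl hD hD' hQD hQD'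
  -- D' 1 = 0
  have hD'1 : D' 1 = 0 := by
    have h := dev_ones 𝒜 D' (s'+1)
    rw [hordD' _] at h
    have := h.symm
    rcases smul_eq_zero.mp this with h' | h'
    · exact absurd h' (pow_ne_zero _ (by norm_num))
    · exact h'
  have hF1 : (D ∘ₗ D') 1 = 0 := by
    simp [LinearMap.comp_apply, hD'1]
  -- final
  set m := r'+1+s' with hm
  intro a
  rw [show dev 𝒜 (D ∘ₗ D') (r'+1+(s'+1)) a = dev 𝒜 (D ∘ₗ D') (m+1) a from rfl,
    dev_eq_word 𝒜 hcomm (dg+eg) (D ∘ₗ D') hF m a]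
  set c := a (Fin.last (m+1)) with hc
  set W := word 𝒜 (dg+eg) (D ∘ₗ D') (m+1) (fun i => a i.castSucc) with hW
  set P := dev 𝒜 (D ∘ₗ D') m (fun i => a i.castSucc) with hP
  set δ := dg + eg + ∑ i : Fin (m+1), (a i.castSucc).1 with hδ
  -- words of length m+2 vanish; specialize to snoc front c at 1
  have hkey := hQ (Fin.snoc (fun i => a i.castSucc) c) 0 1 (SetLike.one_mem_graded 𝒜)
  rw [word_succ, psiHat_apply, Fin.snoc_last] at hkey
  simp only [Fin.snoc_castSucc] at hkey
  rw [mul_one] at hkey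
  have hkey' : W ((c.2:A)) - ((-1:k)^(c.1 * δ)) • ((c.2:A) * W 1) = 0 := hkey
  -- hkey : W ↑c.2 - (-1)^(c.1 * δ') • (↑c.2 * W 1) = 0  with δ' the sum expression
  -- compute W 1 = P
  have hW1 : W 1 = P := by
    have h := dev_eq_word 𝒜 hcomm (dg+eg) (D ∘ₗ D') hF m (Fin.snoc (fun i => a i.castSucc) (oneH 𝒜))
    rw [dev_snoc_one 𝒜 (D ∘ₗ D') hF1 (m+1) (fun i => a i.castSucc), Fin.snoc_last] at h
    simp only [Fin.snoc_castSucc, oneH_coe, mul_one] at h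
    exact (sub_eq_zero.mp h.symm)
  rw [hW1] at hkey'
  have hPmem : P ∈ 𝒜 δ :=
    mem_deg_congr 𝒜 (by rw [hδ])
      (dev_mem 𝒜 hcomm (dg+eg) (D ∘ₗ D') hF m (fun i => a i.castSucc))
  have h4 : P * (c.2:A) = ((-1:k)^(δ * c.1)) • ((c.2:A) * P) :=
    hcomm δ c.1 P (c.2:A) hPmem c.2.2
  have h5 : W (c.2:A) = ((-1:k)^(c.1 * δ)) • ((c.2:A) * P) := sub_eq_zero.mp hkey'
  rw [h5, h4, show δ * c.1 = c.1 * δ from mul_comm _ _, sub_self]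


end Aux

/-- The composition of a degree `dg` order `r` derivation with a degree `eg` order `s`
derivation is a degree `dg + eg` order `r + s` derivation:
`Der^r_k(A) ∘ Der^s_l(A) ⊆ Der^{r+s}_{k+l}(A)`. -/
theorem stmt5 {k A : Type} [Field k] [CharZero k] [Ring A] [Algebra k A]
    (𝒜 : ℤ → Submodule k A) [SetLike.GradedMonoid 𝒜]
    (hcomm : SuperComm 𝒜)
    (dg eg : ℤ) (D D' : A →ₗ[k] A)
    (hD : ∀ (i : ℤ) (a : A), a ∈ 𝒜 i → D a ∈ 𝒜 (i + dg))
    (hD' : ∀ (i : ℤ) (a : A), a ∈ 𝒜 i → D' a ∈ 𝒜 (i + eg))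
    (r s : ℕ) (hr : 1 ≤ r) (hs : 1 ≤ s)
    (hordD : ∀ a : Fin (r+1) → Σ i : ℤ, 𝒜 i, dev 𝒜 D r a = 0)
    (hordD' : ∀ a : Fin (s+1) → Σ i : ℤ, 𝒜 i, dev 𝒜 D' s a = 0) :
    (∀ (i : ℤ) (a : A), a ∈ 𝒜 i → (D ∘ₗ D') a ∈ 𝒜 (i + (dg + eg))) ∧
    (∀ a : Fin (r+s+1) → Σ i : ℤ, 𝒜 i, dev 𝒜 (D ∘ₗ D') (r+s) a = 0) := by
  constructor
  · intro i a ha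
    exact mem_deg_congr 𝒜 (by ring) (hD _ _ (hD' i a ha))
  · obtain ⟨r', rfl⟩ : ∃ r', r = r'+1 := ⟨r-1, by omega⟩
    obtain ⟨s', rfl⟩ : ∃ s', s = s'+1 := ⟨s-1, by omega⟩
    exact main_order 𝒜 hcomm dg eg D D' hD hD' r' s' hordD hordD'
end

section
/- If ∇ is a derivation of order r and degree k, and ∇' is a derivation of order s and degree l on a graded commutative algebra A, then the graded commutator [∇,∇'] = ∇∘∇' − (−1)^{kl}∇'∘∇ is a derivation of order r+s−1 and degree k+l. -/
open scoped TensorProduct DirectSum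

namespace Stmt6Aux

variable {k A : Type} [Field k] [Ring A] [Algebra k A]

noncomputable def deltaC (c : k) (b : A) (E : A →ₗ[k] A) : A →ₗ[k] A :=
  E ∘ₗ LinearMap.mulLeft k b - c • (LinearMap.mulLeft k b ∘ₗ E) - LinearMap.mulLeft k (E b)

lemma deltaC_apply (c : k) (b : A) (E : A →ₗ[k] A) (x : A) :
    deltaC c b E x = E (b * x) - c • (b * E x) - E b * x := by
  simp [deltaC]

noncomputable def delta (β e : ℤ) (b : A) (E : A →ₗ[k] A) : A →ₗ[k] A :=
  deltaC ((-1:k)^(e*β)) b E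

lemma delta_apply (β e : ℤ) (b : A) (E : A →ₗ[k] A) (x : A) :
    delta β e b E x = E (b * x) - ((-1:k)^(e*β)) • (b * E x) - E b * x := deltaC_apply _ _ _ _

lemma delta_add (β e : ℤ) (b : A) (E F : A →ₗ[k] A) :
    delta β e b (E + F) = delta β e b E + delta β e b F := by
  ext x
  simp only [delta_apply, LinearMap.add_apply, mul_add, add_mul, smul_add]
  abel

lemma delta_smul (β e : ℤ) (b : A) (c : k) (E : A →ₗ[k] A) :
    delta β e b (c • E) = c • delta β e b E := by
  ext x
  simp only [delta_apply, LinearMap.smul_apply, mul_smul_comm, smul_mul_assoc, smul_sub]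
  rw [smul_comm]

lemma key (u v w : k) (hv : v * v = 1) (hw : w * w = 1) (b : A) (E F : A →ₗ[k] A) :
    deltaC (u*v) b (E ∘ₗ F - w • (F ∘ₗ E)) =
      (E ∘ₗ deltaC v b F - (w*u) • (deltaC v b F ∘ₗ E))
      + v • (deltaC u b E ∘ₗ F - (w*v) • (F ∘ₗ deltaC u b E))
      + deltaC (w*u) (F b) E
      - w • deltaC (w*v) (E b) F := by
  ext x
  simp only [deltaC_apply, LinearMap.sub_apply, LinearMap.add_apply, LinearMap.smul_apply,
    LinearMap.comp_apply, map_sub, map_smul, mul_sub, sub_mul, mul_smul_comm, smul_mul_assoc,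
    smul_sub, smul_smul, smul_add, add_mul, mul_add]
  match_scalars <;> first
    | ring1
    | linear_combination w * hv
    | linear_combination (-(w*u)) * hv
    | linear_combination (-v) * hw
    | linear_combination (-w) * hv
    | linear_combination v * hw
    | linear_combination hw
    | linear_combination hv
    | linear_combination u * hv
    | linear_combination u * hw
    | linear_combination w * hw
    | linear_combination (u*v) * hw
    | linear_combination (u*w) * hv


lemma neg_one_zpow_add (m n : ℤ) : (-1:k)^(m+n) = (-1:k)^m * (-1:k)^n :=
  zpow_add₀ (by norm_num) m n

lemma neg_one_zpow_sq (m : ℤ) : (-1:k)^m * (-1:k)^m = 1 := by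
  rw [← neg_one_zpow_add, show m + m = 2*m by ring, zpow_mul]
  norm_num

lemma key' (β e f : ℤ) (b : A) (E F : A →ₗ[k] A) :
    delta β (e+f) b (E ∘ₗ F - ((-1:k)^(e*f)) • (F ∘ₗ E)) =
      (E ∘ₗ delta β f b F - ((-1:k)^(e*(f+β))) • (delta β f b F ∘ₗ E))
      + ((-1:k)^(f*β)) • (delta β e b E ∘ₗ F - ((-1:k)^((e+β)*f)) • (F ∘ₗ delta β e b E))
      + delta (β+f) e (F b) E
      - ((-1:k)^(e*f)) • delta (β+e) f (E b) F := by
  simp only [delta]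
  rw [show (e+f)*β = e*β + f*β by ring, show e*(f+β) = e*f + e*β by ring,
    show (e+β)*f = e*f + f*β by ring, show e*(β+f) = e*f + e*β by ring,
    show f*(β+e) = e*f + f*β by ring]
  simp only [neg_one_zpow_add]
  exact key _ _ _ (neg_one_zpow_sq _) (neg_one_zpow_sq _) b E F

variable (𝒜 : ℤ → Submodule k A)

def Hom (e : ℤ) (E : A →ₗ[k] A) : Prop := ∀ (i : ℤ) (a : A), a ∈ 𝒜 i → E a ∈ 𝒜 (i + e)

def Ord : ℕ → ℤ → (A →ₗ[k] A) → Prop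
  | 0, _, E => ∀ (i : ℤ) (a : A), a ∈ 𝒜 i → E a = 0
  | (n+1), e, E => ∀ (β : ℤ) (b : A), b ∈ 𝒜 β → Ord n (e+β) (delta β e b E)

lemma ord_zero_iff {d : ℤ} {E : A →ₗ[k] A} :
    Ord 𝒜 0 d E ↔ ∀ (i : ℤ) (a : A), a ∈ 𝒜 i → E a = 0 := Iff.rfl

lemma ord_succ_iff {n : ℕ} {d : ℤ} {E : A →ₗ[k] A} :
    Ord 𝒜 (n+1) d E ↔ ∀ (β : ℤ) (b : A), b ∈ 𝒜 β → Ord 𝒜 n (d+β) (delta β d b E) := Iff.rfl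

lemma ord_cast {n n' : ℕ} {d d' : ℤ} {E : A →ₗ[k] A} (h : Ord 𝒜 n d E)
    (hn : n = n') (hd : d = d') : Ord 𝒜 n' d' E := by subst hn; subst hd; exact h

variable [SetLike.GradedMonoid 𝒜]

lemma hom_delta {e β : ℤ} {b : A} {E : A →ₗ[k] A} (hb : b ∈ 𝒜 β) (hE : Hom 𝒜 e E) :
    Hom 𝒜 (e+β) (delta β e b E) := by
  intro i x hx
  rw [delta_apply]
  have h1 : E (b*x) ∈ 𝒜 (β + i + e) := hE _ _ (SetLike.mul_mem_graded hb hx)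
  have h2 : b * E x ∈ 𝒜 (β + (i + e)) := SetLike.mul_mem_graded hb (hE _ _ hx)
  have h3 : E b * x ∈ 𝒜 (β + e + i) := SetLike.mul_mem_graded (hE _ _ hb) hx
  have e1 : β + i + e = i + (e+β) := by ring
  have e2 : β + (i + e) = i + (e+β) := by ring
  have e3 : β + e + i = i + (e+β) := by ring
  exact Submodule.sub_mem _ (Submodule.sub_mem _ (e1 ▸ h1)
    (Submodule.smul_mem _ _ (e2 ▸ h2))) (e3 ▸ h3)

lemma ord_add : ∀ {n : ℕ} {d : ℤ} {E F : A →ₗ[k] A},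
    Ord 𝒜 n d E → Ord 𝒜 n d F → Ord 𝒜 n d (E + F)
  | 0, _, E, F, hE, hF => fun i a ha => by
      simp [(ord_zero_iff 𝒜).mp hE i a ha, (ord_zero_iff 𝒜).mp hF i a ha]
  | (n+1), d, E, F, hE, hF => fun β b hb => by
      rw [delta_add]; exact ord_add (hE β b hb) (hF β b hb)

lemma ord_smul : ∀ {n : ℕ} {d : ℤ} (c : k) {E : A →ₗ[k] A},
    Ord 𝒜 n d E → Ord 𝒜 n d (c • E)
  | 0, _, c, E, hE => fun i a ha => by
      simp [LinearMap.smul_apply, (ord_zero_iff 𝒜).mp hE i a ha]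
  | (n+1), d, c, E, hE => fun β b hb => by
      rw [delta_smul]; exact ord_smul c (hE β b hb)

lemma ord_sub {n : ℕ} {d : ℤ} {E F : A →ₗ[k] A}
    (hE : Ord 𝒜 n d E) (hF : Ord 𝒜 n d F) : Ord 𝒜 n d (E - F) := by
  rw [sub_eq_add_neg, ← neg_one_smul k F]
  exact ord_add 𝒜 hE (ord_smul 𝒜 _ hF)

lemma ord_mono : ∀ {n : ℕ} {d : ℤ} {E : A →ₗ[k] A}, Ord 𝒜 n d E → Ord 𝒜 (n+1) d E
  | 0, d, E, hE => fun β b hb i x hx => by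
      rw [delta_apply, (ord_zero_iff 𝒜).mp hE _ _ hx, (ord_zero_iff 𝒜).mp hE _ _ hb,
        (ord_zero_iff 𝒜).mp hE _ _ (SetLike.mul_mem_graded hb hx)]
      simp
  | (n+1), d, E, hE => fun β b hb => ord_mono (hE β b hb)

lemma ord_of_le {n m : ℕ} (hnm : n ≤ m) {d : ℤ} {E : A →ₗ[k] A}
    (hE : Ord 𝒜 n d E) : Ord 𝒜 m d E := by
  induction hnm with
  | refl => exact hE
  | step _ ih => exact ord_mono 𝒜 ih

lemma ord_zero_compL {d : ℤ} (E : A →ₗ[k] A) {G : A →ₗ[k] A} (hG : Ord 𝒜 0 d G)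
    (d' : ℤ) : Ord 𝒜 0 d' (E ∘ₗ G) := fun i a ha => by
  simp [LinearMap.comp_apply, (ord_zero_iff 𝒜).mp hG i a ha]

lemma ord_zero_compR {d e : ℤ} {E G : A →ₗ[k] A} (hG : Ord 𝒜 0 d G)
    (hE : Hom 𝒜 e E) (d' : ℤ) : Ord 𝒜 0 d' (G ∘ₗ E) := fun i a ha => by
  simp [LinearMap.comp_apply, (ord_zero_iff 𝒜).mp hG _ _ (hE i a ha)]


lemma ord_comm : ∀ (N r s : ℕ), r + s ≤ N → 1 ≤ r → 1 ≤ s →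
    ∀ (e f : ℤ) (E F : A →ₗ[k] A), Hom 𝒜 e E → Hom 𝒜 f F →
    Ord 𝒜 r e E → Ord 𝒜 s f F →
    Ord 𝒜 (r+s-1) (e+f) (E ∘ₗ F - ((-1:k)^(e*f)) • (F ∘ₗ E)) := by
  intro N
  induction N with
  | zero => intro r s hN hr _; omega
  | succ N ih =>
    intro r s hN hr hs e f E F hE hF hOE hOF
    obtain ⟨r', rfl⟩ : ∃ r', r = r'+1 := ⟨r-1, by omega⟩
    obtain ⟨s', rfl⟩ : ∃ s', s = s'+1 := ⟨s-1, by omega⟩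
    have hidx : r'+1+(s'+1)-1 = (r'+s')+1 := by omega
    rw [hidx, ord_succ_iff]
    intro β b hb
    rw [key']
    -- T1
    have hT1 : Ord 𝒜 (r'+s') (e+f+β)
        (E ∘ₗ delta β f b F - ((-1:k)^(e*(f+β))) • (delta β f b F ∘ₗ E)) := by
      have hdF : Ord 𝒜 s' (f+β) (delta β f b F) := (ord_succ_iff 𝒜).mp hOF β b hb
      have hdFhom : Hom 𝒜 (f+β) (delta β f b F) := hom_delta 𝒜 hb hF
      cases s' with
      | zero =>
        refine ord_of_le 𝒜 (Nat.zero_le _) ?_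
        exact ord_sub 𝒜 (ord_zero_compL 𝒜 E hdF _)
          (ord_smul 𝒜 _ (ord_zero_compR 𝒜 hdF hE _))
      | succ s'' =>
        have h := ih (r'+1) (s''+1) (by omega) (by omega) (by omega) e (f+β) E
          (delta β f b F) hE hdFhom hOE hdF
        exact ord_cast 𝒜 h (by omega) (by ring)
    -- T2
    have hT2 : Ord 𝒜 (r'+s') (e+f+β)
        (delta β e b E ∘ₗ F - ((-1:k)^((e+β)*f)) • (F ∘ₗ delta β e b E)) := by
      have hdE : Ord 𝒜 r' (e+β) (delta β e b E) := (ord_succ_iff 𝒜).mp hOE β b hb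
      have hdEhom : Hom 𝒜 (e+β) (delta β e b E) := hom_delta 𝒜 hb hE
      cases r' with
      | zero =>
        refine ord_of_le 𝒜 (Nat.zero_le _) ?_
        exact ord_sub 𝒜 (ord_zero_compR 𝒜 hdE hF _)
          (ord_smul 𝒜 _ (ord_zero_compL 𝒜 F hdE _))
      | succ r'' =>
        have h := ih (r''+1) (s'+1) (by omega) (by omega) (by omega) (e+β) f
          (delta β e b E) F hdEhom hF hdE hOF
        exact ord_cast 𝒜 h (by omega) (by ring)
    -- T3
    have hT3 : Ord 𝒜 (r'+s') (e+f+β) (delta (β+f) e (F b) E) := by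
      have h : Ord 𝒜 r' (e+(β+f)) (delta (β+f) e (F b) E) :=
        (ord_succ_iff 𝒜).mp hOE (β+f) (F b) (hF β b hb)
      exact ord_of_le 𝒜 (by omega) (ord_cast 𝒜 h rfl (by ring))
    -- T4
    have hT4 : Ord 𝒜 (r'+s') (e+f+β) (delta (β+e) f (E b) F) := by
      have h : Ord 𝒜 s' (f+(β+e)) (delta (β+e) f (E b) F) :=
        (ord_succ_iff 𝒜).mp hOF (β+e) (E b) (hE β b hb)
      exact ord_of_le 𝒜 (by omega) (ord_cast 𝒜 h rfl (by ring))
    exact ord_cast 𝒜 (ord_sub 𝒜 (ord_add 𝒜 (ord_add 𝒜 hT1 (ord_smul 𝒜 _ hT2)) hT3)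
      (ord_smul 𝒜 _ hT4)) rfl (by ring)


lemma dev_zero (D : A →ₗ[k] A) (a : Fin 1 → Σ i : ℤ, 𝒜 i) :
    dev 𝒜 D 0 a = D ((a 0).2 : A) := rfl

lemma dev_succ (D : A →ₗ[k] A) (n : ℕ) (a : Fin (n+2) → Σ i : ℤ, 𝒜 i) :
    dev 𝒜 D (n+1) a =
      dev 𝒜 D n (Fin.snoc (fun i : Fin n => a i.castSucc.castSucc)
        ⟨(a (Fin.castSucc (Fin.last n))).1 + (a (Fin.last (n+1))).1,
          ⟨((a (Fin.castSucc (Fin.last n))).2 : A) * ((a (Fin.last (n+1))).2 : A),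
            SetLike.mul_mem_graded (a (Fin.castSucc (Fin.last n))).2.2
              (a (Fin.last (n+1))).2.2⟩⟩)
      - dev 𝒜 D n (fun i : Fin (n+1) => a i.castSucc) * ((a (Fin.last (n+1))).2 : A)
      - ((-1 : k) ^ ((a (Fin.castSucc (Fin.last n))).1 * (a (Fin.last (n+1))).1)) •
        (dev 𝒜 D n (Fin.snoc (fun i : Fin n => a i.castSucc.castSucc) (a (Fin.last (n+1))))
          * ((a (Fin.castSucc (Fin.last n))).2 : A)) := rfl

lemma dev_tail (hcomm : SuperComm 𝒜) :
    ∀ (n : ℕ) (E : A →ₗ[k] A) (e : ℤ), Hom 𝒜 e E →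
    ∀ (x : Σ i : ℤ, 𝒜 i) (a' : Fin (n+1) → Σ i : ℤ, 𝒜 i),
      dev 𝒜 E (n+1) (Fin.cons x a') = dev 𝒜 (delta x.1 e (x.2 : A) E) n a' := by
  intro n
  induction n with
  | zero =>
    intro E e hE x a'
    rw [dev_succ]
    have h0 : Fin.last 0 = (0 : Fin 1) := by ext; simp
    have h1 : (Fin.cons x a' : Fin (0+1+1) → Σ i : ℤ, 𝒜 i) (Fin.last (0+1)) = a' 0 := by
      rw [← Fin.succ_last, Fin.cons_succ, h0]
    have h2 : (Fin.cons x a' : Fin (0+1+1) → Σ i : ℤ, 𝒜 i) ((Fin.last 0).castSucc) = x := by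
      rw [h0, Fin.castSucc_zero, Fin.cons_zero]
    simp only [dev_zero, Fin.snoc_zero, Fin.castSucc_zero, Fin.cons_zero]
    rw [h1, h2]
    have h4 : (Fin.cons x a' : Fin (0+1+1) → Σ i : ℤ, 𝒜 i) 0 = x := Fin.cons_zero _ _
    rw [h4, delta_apply]
    have hsc : (E ((a' 0).snd : A)) * (x.snd : A)
        = ((-1:k) ^ (((a' 0).fst + e) * x.fst)) • ((x.snd : A) * E ((a' 0).snd : A)) :=
      hcomm _ _ _ _ (hE _ _ (a' 0).snd.2) x.snd.2
    rw [hsc, smul_smul, ← neg_one_zpow_add,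
      show x.fst * (a' 0).fst + ((a' 0).fst + e) * x.fst = 2*(x.fst*(a' 0).fst) + e*x.fst by ring,
      neg_one_zpow_add, zpow_mul]
    norm_num
    abel
  | succ n ih =>
    intro E e hE x a'
    have hA : (Fin.cons x a' : Fin (n+1+1+1) → Σ i : ℤ, 𝒜 i) ((Fin.last (n+1)).castSucc)
        = a' ((Fin.last n).castSucc) := by
      rw [show ((Fin.last (n+1)).castSucc : Fin (n+1+1+1)) = ((Fin.last n).castSucc).succ from
        by ext; simp, Fin.cons_succ]
    have hB : (Fin.cons x a' : Fin (n+1+1+1) → Σ i : ℤ, 𝒜 i) (Fin.last (n+1+1))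
        = a' (Fin.last (n+1)) := by
      rw [← Fin.succ_last, Fin.cons_succ]
    have hF : (fun i : Fin (n+1) =>
          (Fin.cons x a' : Fin (n+1+1+1) → Σ i : ℤ, 𝒜 i) i.castSucc.castSucc)
        = Fin.cons x (fun i : Fin n => a' i.castSucc.castSucc) := by
      funext i
      cases i using Fin.cases with
      | zero => simp
      | succ j => simp only [← Fin.succ_castSucc, Fin.cons_succ]
    have hf2 : (fun i : Fin (n+1+1) =>
          (Fin.cons x a' : Fin (n+1+1+1) → Σ i : ℤ, 𝒜 i) i.castSucc)
        = Fin.cons x (fun i : Fin (n+1) => a' i.castSucc) := by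
      funext i
      cases i using Fin.cases with
      | zero => simp
      | succ j => simp only [← Fin.succ_castSucc, Fin.cons_succ]
    rw [dev_succ 𝒜 E (n+1) (Fin.cons x a')]
    simp only [hA, hB, hF, hf2, ← Fin.cons_snoc_eq_snoc_cons]
    simp only [ih E e hE x]
    rw [dev_succ]
    rw [hA, hB]

lemma ord_iff_dev (hcomm : SuperComm 𝒜) :
    ∀ (n : ℕ) (e : ℤ) (E : A →ₗ[k] A), Hom 𝒜 e E →
      ((∀ a : Fin (n+1) → Σ i : ℤ, 𝒜 i, dev 𝒜 E n a = 0) ↔ Ord 𝒜 n e E) := by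
  intro n
  induction n with
  | zero =>
    intro e E hE
    constructor
    · intro h i a ha
      exact h (fun _ => ⟨i, a, ha⟩)
    · intro h a
      exact (ord_zero_iff 𝒜).mp h _ _ (a 0).2.2
  | succ n ih =>
    intro e E hE
    constructor
    · intro h
      rw [ord_succ_iff]
      intro β b hb
      refine ((ih (e+β) (delta β e b E) (hom_delta 𝒜 hb hE)).mp ?_)
      intro a'
      have := dev_tail 𝒜 hcomm n E e hE ⟨β, b, hb⟩ a'
      rw [← this]
      exact h _
    · intro h a
      have hcst : a = Fin.cons (a 0) (fun i => a i.succ) := by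
        funext i
        cases i using Fin.cases <;> simp
      rw [hcst, dev_tail 𝒜 hcomm n E e hE (a 0) (fun i => a i.succ)]
      have hO : Ord 𝒜 n (e + (a 0).1) (delta (a 0).1 e ((a 0).2 : A) E) :=
        (ord_succ_iff 𝒜).mp h (a 0).1 _ (a 0).2.2
      exact (ih _ _ (hom_delta 𝒜 (a 0).2.2 hE)).mpr hO _

end Stmt6Aux


/-- The graded commutator `[∇,∇'] = ∇∘∇' - (-1)^{kl} ∇'∘∇` of derivations of orders `r`, `s`
and degrees `dg`, `eg` is a derivation of order `r+s-1` and degree `dg+eg`. -/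
theorem stmt6 {k A : Type} [Field k] [CharZero k] [Ring A] [Algebra k A]
    (𝒜 : ℤ → Submodule k A) [SetLike.GradedMonoid 𝒜]
    (hcomm : SuperComm 𝒜)
    (dg eg : ℤ) (D D' : A →ₗ[k] A)
    (hD : ∀ (i : ℤ) (a : A), a ∈ 𝒜 i → D a ∈ 𝒜 (i + dg))
    (hD' : ∀ (i : ℤ) (a : A), a ∈ 𝒜 i → D' a ∈ 𝒜 (i + eg))
    (r s : ℕ) (hr : 1 ≤ r) (hs : 1 ≤ s)
    (hordD : ∀ a : Fin (r+1) → Σ i : ℤ, 𝒜 i, dev 𝒜 D r a = 0)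
    (hordD' : ∀ a : Fin (s+1) → Σ i : ℤ, 𝒜 i, dev 𝒜 D' s a = 0) :
    (∀ (i : ℤ) (a : A), a ∈ 𝒜 i →
        (D ∘ₗ D' - ((-1 : k) ^ (dg * eg)) • (D' ∘ₗ D)) a ∈ 𝒜 (i + (dg + eg))) ∧
    (∀ a : Fin (r+s-1+1) → Σ i : ℤ, 𝒜 i,
        dev 𝒜 (D ∘ₗ D' - ((-1 : k) ^ (dg * eg)) • (D' ∘ₗ D)) (r+s-1) a = 0) := by
  classical
  have hC : ∀ (i : ℤ) (a : A), a ∈ 𝒜 i →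
      (D ∘ₗ D' - ((-1 : k) ^ (dg * eg)) • (D' ∘ₗ D)) a ∈ 𝒜 (i + (dg + eg)) := by
    intro i a ha
    simp only [LinearMap.sub_apply, LinearMap.smul_apply, LinearMap.comp_apply]
    have h1 : D (D' a) ∈ 𝒜 (i + eg + dg) := hD _ _ (hD' _ _ ha)
    have h2 : D' (D a) ∈ 𝒜 (i + dg + eg) := hD' _ _ (hD _ _ ha)
    have e1 : i + eg + dg = i + (dg + eg) := by ring
    have e2 : i + dg + eg = i + (dg + eg) := by ring
    exact Submodule.sub_mem _ (e1 ▸ h1) (Submodule.smul_mem _ _ (e2 ▸ h2))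
  refine ⟨hC, ?_⟩
  have hOD : Stmt6Aux.Ord 𝒜 r dg D :=
    (Stmt6Aux.ord_iff_dev 𝒜 hcomm r dg D hD).mp hordD
  have hOD' : Stmt6Aux.Ord 𝒜 s eg D' :=
    (Stmt6Aux.ord_iff_dev 𝒜 hcomm s eg D' hD').mp hordD'
  have hcomb := Stmt6Aux.ord_comm 𝒜 (r+s) r s le_rfl hr hs dg eg D D' hD hD' hOD hOD'
  exact (Stmt6Aux.ord_iff_dev 𝒜 hcomm (r+s-1) (dg+eg) _ hC).mpr hcomb
end
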